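/- Let b⁺, b⁻, F ∈ ℝ, let β ∈ ℝ, and set b̂ = {{b}} + β[[b]] and B̂ = b̂·F, where {{b}} = ½(b⁺+b⁻) and [[b]] = b⁺−b⁻. Then the entropy flux jump, taken with B̂ and F single-valued, i.e. [[−b·B̂ + ½b²·F]] = (−b⁺B̂ + ½(b⁺)²F) − (−b⁻B̂ + ½(b⁻)²F), satisfies [[−b·B̂ + ½b²·F]] = −β·[[b]]²·F. In particular, if β = 0 the jump vanishes, and if β = ½·sign(F) the jump equals −½[[b]]²·|F| ≤ 0. -/
import Mathlib

/-- Entropy flux jump identity: with `b̂ = {{b}} + β[[b]]` and `B̂ = b̂·F`,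
`[[−b·B̂ + ½b²·F]] = −β·[[b]]²·F`.  If `β = 0` the jump vanishes, and if
`β = ½·sign(F)` the jump equals `−½[[b]]²·|F| ≤ 0`. -/
theorem entropy_flux_jump (bp bm F β : ℝ)
    (bhat Bhat : ℝ)
    (hbhat : bhat = (1 / 2) * (bp + bm) + β * (bp - bm))
    (hBhat : Bhat = bhat * F) :
    ((-bp * Bhat + (1 / 2) * bp ^ 2 * F) - (-bm * Bhat + (1 / 2) * bm ^ 2 * F) =
      -β * (bp - bm) ^ 2 * F) ∧
    (β = 0 →
      (-bp * Bhat + (1 / 2) * bp ^ 2 * F) - (-bm * Bhat + (1 / 2) * bm ^ 2 * F) = 0) ∧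
    (β = (1 / 2) * Real.sign F →
      ((-bp * Bhat + (1 / 2) * bp ^ 2 * F) - (-bm * Bhat + (1 / 2) * bm ^ 2 * F) =
        -(1 / 2) * (bp - bm) ^ 2 * |F|) ∧
      (-bp * Bhat + (1 / 2) * bp ^ 2 * F) - (-bm * Bhat + (1 / 2) * bm ^ 2 * F) ≤ 0) := by
  subst hBhat hbhat
  have key : (-bp * (((1 / 2) * (bp + bm) + β * (bp - bm)) * F) + (1 / 2) * bp ^ 2 * F) -
      (-bm * (((1 / 2) * (bp + bm) + β * (bp - bm)) * F) + (1 / 2) * bm ^ 2 * F) =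
      -β * (bp - bm) ^ 2 * F := by ring
  refine ⟨key, fun h => by rw [key, h]; ring, fun h => ?_⟩
  have hs : Real.sign F * F = |F| := by
    rcases lt_trichotomy F 0 with hF | hF | hF
    · rw [Real.sign_of_neg hF, abs_of_neg hF]; ring
    · simp [hF]
    · rw [Real.sign_of_pos hF, abs_of_pos hF]; ring
  constructor
  · rw [key, h]
    calc -((1/2) * Real.sign F) * (bp - bm) ^ 2 * F
        = -(1/2) * (bp - bm) ^ 2 * (Real.sign F * F) := by ring
      _ = -(1/2) * (bp - bm) ^ 2 * |F| := by rw [hs]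
  · rw [key, h]
    have : -((1/2) * Real.sign F) * (bp - bm) ^ 2 * F = -(1/2) * (bp - bm) ^ 2 * |F| := by
      rw [← hs]; ring
    rw [this]
    have := sq_nonneg (bp - bm)
    nlinarith [abs_nonneg F]
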